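/- arXiv:2503.07149 — 2 statements merged into one kernel-verified Lean document; each statement's English description precedes it below -/
import Mathlib

section
/- Given the battery dynamics S(t+1) = S(t) + η_c·E_c(t) − (1/η_d)·E_d(t) with 0 ≤ E_c(t) ≤ Ē_c and 0 ≤ E_d(t) ≤ Ē_d, and the objective term π_g·E_g − π_s·(η_c E_c + (1/η_d) E_d) where E_g = Ê − E_c + E_d: if η_c E_c' − (1/η_d)E_d' = η_c E_c − (1/η_d)E_d, 0 ≤ E_c' ≤ E_c, 0 ≤ E_d' ≤ E_d, and E_c'·E_d' = 0, with π_g ≥ 0, π_s > 0, 0 < η_c < 1, 0 < η_d < 1, then π_g(Ê − E_c' + E_d') − π_s(η_c E_c' + (1/η_d)E_d') ≥ π_g(Ê − E_c + E_d) − π_s(η_c E_c + (1/η_d)E_d). -/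
theorem complementarity_not_worse
    (ηc ηd πs πg Ehat Ec Ed Ec' Ed' : ℝ)
    (hηc : 0 < ηc) (hηc1 : ηc < 1) (hηd : 0 < ηd) (hηd1 : ηd < 1)
    (hπs : 0 < πs) (hπg : 0 ≤ πg)
    (hEc : 0 ≤ Ec) (hEd : 0 ≤ Ed) (hEc' : 0 ≤ Ec') (hEd' : 0 ≤ Ed')
    (hle_c : Ec' ≤ Ec) (hle_d : Ed' ≤ Ed)
    (hcompl : Ec' * Ed' = 0)
    (hbal : ηc * Ec' - (1 / ηd) * Ed' = ηc * Ec - (1 / ηd) * Ed) :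
    πg * (Ehat - Ec' + Ed') - πs * (ηc * Ec' + (1 / ηd) * Ed') ≥
    πg * (Ehat - Ec + Ed) - πs * (ηc * Ec + (1 / ηd) * Ed) := by
  have hd : Ed - Ed' = ηc * ηd * (Ec - Ec') := by
    field_simp at hbal
    nlinarith [hbal]
  have h1 : Ec - Ec' - (Ed - Ed') = (1 - ηc * ηd) * (Ec - Ec') := by
    rw [hd]; ring
  have h2 : 0 ≤ (1 - ηc * ηd) * (Ec - Ec') := by
    apply mul_nonneg <;> nlinarith
  nlinarith [mul_nonneg hπg h2, mul_nonneg hπs.le (sub_nonneg.2 hle_c),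
    mul_nonneg (mul_nonneg hπs.le hηc.le) (sub_nonneg.2 hle_c),
    mul_nonneg (mul_nonneg hπs.le (one_div_pos.2 hηd).le) (sub_nonneg.2 hle_d)]
end

section
/- Big-M exactness (converse direction): suppose z₁, z₂, z₃ ∈ {0,1} with z₁ + z₂ + z₃ = 1, and E, γ ∈ ℝ satisfy −M z₁ + E̲ z₂ + Ē z₃ ≤ E ≤ E̲ z₁ + Ē z₂ + M z₃, |γ − γ̄| ≤ M(1−z₃), |γ − γ̄(E−E̲)/(Ē−E̲)| ≤ M(1−z₂), and |γ| ≤ M(1−z₁), for some M > 0 with M > |E| and M > γ̄. Then γ = γ̄·min(1, max(0,(E−E̲)/(Ē−E̲))). -/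
theorem bigM_converse (El Eh g M E γ z₁ z₂ z₃ : ℝ) (hE : El < Eh) (hg : 0 < g)
    (hM : 0 < M) (hME : M > |E|) (hMg : M > g)
    (hz1 : z₁ = 0 ∨ z₁ = 1) (hz2 : z₂ = 0 ∨ z₂ = 1) (hz3 : z₃ = 0 ∨ z₃ = 1)
    (hsum : z₁ + z₂ + z₃ = 1)
    (h1 : -M * z₁ + El * z₂ + Eh * z₃ ≤ E)
    (h2 : E ≤ El * z₁ + Eh * z₂ + M * z₃)
    (h3 : |γ - g| ≤ M * (1 - z₃))
    (h4 : |γ - g * (E - El) / (Eh - El)| ≤ M * (1 - z₂))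
    (h5 : |γ| ≤ M * (1 - z₁)) :
    γ = g * min 1 (max 0 ((E - El) / (Eh - El))) := by
  have hEh : (0:ℝ) < Eh - El := by linarith
  rcases hz1 with h1' | h1'
  · rcases hz2 with h2' | h2'
    · -- z₃ = 1
      have hz3' : z₃ = 1 := by rcases hz3 with h | h <;> linarith
      subst h1' h2' hz3'
      have hγ : γ = g := by
        have : γ - g = 0 := by simpa using h3
        linarith
      have hEge : Eh ≤ E := by linarith
      have hx : (1:ℝ) ≤ (E - El) / (Eh - El) := by
        rw [le_div_iff₀ hEh]; linarith
      rw [hγ, max_eq_right (by linarith), min_eq_left hx, mul_one]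
    · -- z₂ = 1
      have hz3' : z₃ = 0 := by rcases hz3 with h | h <;> linarith
      subst h1' h2' hz3'
      have hγ : γ = g * (E - El) / (Eh - El) := by
        have : γ - g * (E - El) / (Eh - El) = 0 := by simpa using h4
        linarith
      have hEl : El ≤ E := by linarith
      have hEhE : E ≤ Eh := by linarith
      have hx0 : (0:ℝ) ≤ (E - El) / (Eh - El) := div_nonneg (by linarith) (by linarith)
      have hx1 : (E - El) / (Eh - El) ≤ 1 := by
        rw [div_le_one hEh]; linarith
      rw [hγ, max_eq_right hx0, min_eq_right hx1, mul_div_assoc]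
  · -- z₁ = 1
    have hz2' : z₂ = 0 := by rcases hz2 with h | h <;> rcases hz3 with h' | h' <;> linarith
    have hz3' : z₃ = 0 := by rcases hz3 with h | h <;> linarith
    subst h1' hz2' hz3'
    have hγ : γ = 0 := by
      have : γ = 0 := by simpa using h5
      linarith
    have hEle : E ≤ El := by linarith
    have hx : (E - El) / (Eh - El) ≤ 0 := by
      apply div_nonpos_of_nonpos_of_nonneg <;> linarith
    rw [hγ, max_eq_left hx, min_eq_right (by norm_num), mul_zero]
end
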